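/- arXiv:2209.11860 — 10 statements merged into one kernel-verified Lean document; each statement's English description precedes it below -/
import Mathlib

section
/- Let G be a graph and k a positive integer. Suppose that for every assignment w : V(G) → ℝ≥0 of nonnegative weights to the vertices, there exist a vertex x, vertices v_1,…,v_{k+1} in the neighborhood N(x), and vertices u_1,…,u_k not in N(x) ∪ {x}, such that w(v_1) ≤ w(u_1) ≤ w(v_2) ≤ w(u_2) ≤ … ≤ w(u_k) ≤ w(v_{k+1}). Then G is not a star-k-PCG, i.e., there is no weight assignment w and k pairwise disjoint intervals I_1,…,I_k of nonnegative reals such that for all distinct vertices a,b, {a,b} is an edge of G iff w(a)+w(b) ∈ I_1 ∪ … ∪ I_k. -/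
/-- A graph `G` is a star-`k`-PCG if there are nonnegative vertex weights and `k`
pairwise disjoint intervals of nonnegative reals such that two distinct vertices
are adjacent iff the sum of their weights lies in one of the intervals. -/
def IsStarPCG {V : Type*} (G : SimpleGraph V) (k : ℕ) : Prop :=
  ∃ (w : V → ℝ) (I : Fin k → Set ℝ),
    (∀ v, 0 ≤ w v) ∧
    (∀ i, (I i).OrdConnected) ∧
    (∀ i, I i ⊆ Set.Ici 0) ∧
    Pairwise (Function.onFun Disjoint I) ∧
    (∀ a b : V, a ≠ b → (G.Adj a b ↔ ∃ i, w a + w b ∈ I i))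

theorem stmt0 {V : Type*} (G : SimpleGraph V) (k : ℕ) (hk : 0 < k)
    (h : ∀ w : V → ℝ, (∀ v, 0 ≤ w v) →
      ∃ (x : V) (v : Fin (k + 1) → V) (u : Fin k → V),
        (∀ i, G.Adj x (v i)) ∧
        (∀ i, ¬ G.Adj x (u i) ∧ u i ≠ x) ∧
        (∀ i : Fin k, w (v i.castSucc) ≤ w (u i) ∧ w (u i) ≤ w (v i.succ))) :
    ¬ IsStarPCG G k := by
  rintro ⟨w, I, hw, hOrd, _hIci, _hdisj, hiff⟩
  obtain ⟨x, v, u, hv, hu, hord⟩ := h w hw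
  -- for each i, choose an interval containing w x + w (v i)
  have hne : ∀ i, x ≠ v i := fun i => (hv i).ne
  have hmem : ∀ i, ∃ c, w x + w (v i) ∈ I c := fun i =>
    (hiff x (v i) (hne i)).mp (hv i)
  choose f hf using hmem
  obtain ⟨i, j, hij, hfij⟩ := Fintype.exists_ne_map_eq_of_card_lt f (by simp)
  -- wlog i < j
  wlog hlt : i < j generalizing i j
  · exact this j i hij.symm hfij.symm (hij.lt_or_gt.resolve_left hlt)
  -- monotone chain
  have hmono : Monotone (fun i => w (v i)) := by
    rw [Fin.monotone_iff_le_succ]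
    intro i
    exact (hord i).1.trans (hord i).2
  have hik : (i : ℕ) < k := by
    have := j.isLt
    omega
  set i' : Fin k := ⟨i, hik⟩ with hi'
  have h1 : w (v i) ≤ w (u i') := by
    have : i'.castSucc = i := by ext; simp [hi']
    simpa [this] using (hord i').1
  have h2 : w (u i') ≤ w (v j) := by
    refine (hord i').2.trans (hmono ?_)
    rw [Fin.le_def]
    simp only [Fin.val_succ, hi']
    omega
  have hmem' : w x + w (u i') ∈ I (f i) := by
    refine (hOrd (f i)).out (hf i) (hfij ▸ hf j) ?_
    constructor <;> linarith
  have hxu : x ≠ u i' := fun e => (hu i').2 e.symm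
  exact (hu i').1 ((hiff x (u i') hxu).mpr ⟨f i, hmem'⟩)
end

section
/- For every integer n ≥ 5, the cycle graph C_n is not a star-1-PCG: there is no weight function w : V(C_n) → ℝ≥0 and interval I ⊆ ℝ≥0 such that for all distinct vertices a,b, {a,b} is an edge of C_n iff w(a)+w(b) ∈ I. -/
/-- A graph is a star-1-PCG if there are nonnegative vertex weights and one
interval of nonnegative reals such that two distinct vertices are adjacent iff
the sum of their weights lies in the interval. -/
def IsStar1PCG {V : Type*} (G : SimpleGraph V) : Prop :=
  ∃ (w : V → ℝ) (I : Set ℝ),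
    (∀ v, 0 ≤ w v) ∧ I.OrdConnected ∧ I ⊆ Set.Ici 0 ∧
    (∀ a b : V, a ≠ b → (G.Adj a b ↔ w a + w b ∈ I))

/-!
Let `x` be a vertex of minimum weight and orient the cycle so that its
predecessor is not heavier than its successor. On the five consecutive vertices
`x - 2, …, x + 2` the three edges `{x-2, x-1}`, `{x-1, x}`, `{x+1, x+2}` have
their weight sums in `I`; comparing `w (x - 2)` with `w (x + 2)`, one of the two
chords `{x-2, x+1}`, `{x-1, x+2}` has its weight sum squeezed between two of
these, hence in `I`. Since `n ≥ 5` the chords are not edges.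
-/

open scoped Fin.CommRing

theorem Set.OrdConnected.add_mem_or_add_mem {α : Type*} [AddCommMonoid α] [LinearOrder α]
    [IsOrderedAddMonoid α] {I : Set α} (hI : I.OrdConnected) {a b c d e : α}
    (hce : c ≤ e) (hbd : b ≤ d) (hab : a + b ∈ I) (hbc : b + c ∈ I) (hde : d + e ∈ I) :
    a + d ∈ I ∨ b + e ∈ I := by
  rcases le_total a e with hae | hea
  · refine .inl (hI.out hab hde ⟨by gcongr, ?_⟩)
    rw [add_comm d]
    gcongr
  · refine .inr (hI.out hbc hab ⟨by gcongr, ?_⟩)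
    rw [add_comm a]
    gcongr

namespace SimpleGraph

theorem cycleGraph_adj_iff_of_eq_one_or_neg_one {n : ℕ} {u v d : Fin (n + 2)}
    (hd : d = 1 ∨ d = -1) : (cycleGraph (n + 2)).Adj u v ↔ u - v = d ∨ v - u = d := by
  have sub_eq_neg_one : ∀ a b : Fin (n + 2), a - b = -1 ↔ b - a = 1 := fun a b => by
    rw [← neg_sub b a, neg_inj]
  rcases hd with rfl | rfl
  · rfl
  · rw [sub_eq_neg_one, sub_eq_neg_one, or_comm, cycleGraph_adj]

theorem cycleGraph_adj_of_sub_eq {n : ℕ} {u v d : Fin (n + 2)} (hd : d = 1 ∨ d = -1)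
    (h : v - u = d) : (cycleGraph (n + 2)).Adj u v :=
  (cycleGraph_adj_iff_of_eq_one_or_neg_one hd).2 (.inr h)

theorem cycleGraph_ne_and_not_adj_of_sub_eq_three_mul {n : ℕ} {u v d : Fin (n + 5)}
    (hd : d = 1 ∨ d = -1) (h : v - u = 3 * d) : u ≠ v ∧ ¬(cycleGraph (n + 5)).Adj u v := by
  have natCast_ne_zero : ∀ k : ℕ, 0 < k → k < n + 5 → (k : Fin (n + 5)) ≠ 0 :=
    fun k hk0 hkn hk => (Nat.le_of_dvd hk0 (Fin.natCast_eq_zero.1 hk)).not_gt hkn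
  have hdd : d * d = 1 := by rcases hd with rfl | rfl <;> ring
  refine ⟨fun huv => natCast_ne_zero 3 (by omega) (by omega) ?_, fun hadj => ?_⟩
  · subst huv
    push_cast
    linear_combination (-d) * h - 3 * hdd
  · rcases (cycleGraph_adj_iff_of_eq_one_or_neg_one (n := n + 3) hd).1 hadj with h' | h'
    · refine natCast_ne_zero 4 (by omega) (by omega) ?_
      push_cast
      linear_combination (-d) * (h + h') - 4 * hdd
    · refine natCast_ne_zero 2 (by omega) (by omega) ?_
      push_cast
      linear_combination d * (h' - h) - 2 * hdd

end SimpleGraph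

theorem stmt1 (n : ℕ) (hn : 5 ≤ n) : ¬ IsStar1PCG (SimpleGraph.cycleGraph n) := by
  obtain ⟨m, rfl⟩ := Nat.exists_eq_add_of_le' hn
  rintro ⟨w, I, -, hI, -, hadj⟩
  obtain ⟨x, hx⟩ := Finite.exists_min w
  obtain ⟨d, hd, hw⟩ : ∃ d : Fin (m + 5), (d = 1 ∨ d = -1) ∧ w (x - d) ≤ w (x + d) := by
    rcases le_total (w (x - 1)) (w (x + 1)) with h | h
    · exact ⟨1, .inl rfl, h⟩
    · exact ⟨-1, .inr rfl, by simpa only [sub_neg_eq_add, ← sub_eq_add_neg] using h⟩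
  have edge : ∀ u v, v - u = d → w u + w v ∈ I := fun u v h =>
    have huv := SimpleGraph.cycleGraph_adj_of_sub_eq hd h
    (hadj u v huv.ne).1 huv
  have chord : ∀ u v, v - u = 3 * d → w u + w v ∉ I := fun u v h hmem =>
    have ⟨hne, hnadj⟩ := SimpleGraph.cycleGraph_ne_and_not_adj_of_sub_eq_three_mul hd h
    hnadj ((hadj u v hne).2 hmem)
  rcases hI.add_mem_or_add_mem (hx (x + 2 * d)) hw (edge (x - 2 * d) (x - d) (by ring))
      (edge (x - d) x (by ring)) (edge (x + d) (x + 2 * d) (by ring)) with h | h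
  · exact chord _ _ (by ring) h
  · exact chord _ _ (by ring) h
end

section
/- For every integer n ≥ 3, the cycle graph C_n is a star-2-PCG: there exist a weight function w : V(C_n) → ℝ≥0 and two disjoint intervals I_1, I_2 ⊆ ℝ≥0 such that for all distinct vertices a,b, {a,b} is an edge of C_n iff w(a)+w(b) ∈ I_1 ∪ I_2. -/
set_option maxHeartbeats 2000000

/-- A graph is a star-2-PCG if there are nonnegative vertex weights and two
disjoint intervals of nonnegative reals such that two distinct vertices are
adjacent iff the sum of their weights lies in the union of the intervals. -/
def IsStar2PCG {V : Type*} (G : SimpleGraph V) : Prop :=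
  ∃ (w : V → ℝ) (I₁ I₂ : Set ℝ),
    (∀ v, 0 ≤ w v) ∧ I₁.OrdConnected ∧ I₂.OrdConnected ∧
    I₁ ⊆ Set.Ici 0 ∧ I₂ ⊆ Set.Ici 0 ∧ Disjoint I₁ I₂ ∧
    (∀ a b : V, a ≠ b → (G.Adj a b ↔ w a + w b ∈ I₁ ∪ I₂))

private def pcgF (n i : ℕ) : ℤ :=
  (2*n+2 : ℤ) + (if i = n-1 then (if n % 2 = 1 then ((n:ℤ)+1) else -(n:ℤ))
    else (if i % 2 = 0 then ((i:ℤ)+1) else -((i:ℤ)+1)))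

private lemma pcgF_nonneg (n i : ℕ) (hi : i < n) : 0 ≤ pcgF n i := by
  unfold pcgF; split_ifs <;> omega

private lemma mod_helper (m t : ℕ) (hm : 1 < m) (h : t < 2*m) :
    t % m = 1 ↔ (t = 1 ∨ t = m + 1) := by
  rcases lt_or_ge t m with h1 | h1
  · rw [Nat.mod_eq_of_lt h1]; omega
  · rw [Nat.mod_eq_sub_mod h1, Nat.mod_eq_of_lt (show t - m < m by omega)]; omega

private lemma pcg_wrap (n : ℕ) (hn : 3 ≤ n) :
    pcgF n 0 + pcgF n (n-1) = if n % 2 = 1 then (5*(n:ℤ)+6) else (3*(n:ℤ)+5) := by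
  have h0 : pcgF n 0 = 2*n+3 := by
    unfold pcgF
    rw [if_neg (by omega : ¬(0 = n-1)), if_pos rfl]
    push_cast; ring
  have h1 : pcgF n (n-1) = if n % 2 = 1 then (3*(n:ℤ)+3) else ((n:ℤ)+2) := by
    unfold pcgF
    rw [if_pos rfl]
    split_ifs <;> ring
  rw [h0, h1]; split_ifs <;> ring

private lemma key (n a b : ℕ) (hn : 3 ≤ n) (ha : a < n) (hb : b < n) (hab : a ≠ b) :
    (b = a + 1 ∨ a = b + 1 ∨ (a = 0 ∧ b = n-1) ∨ (b = 0 ∧ a = n-1)) ↔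
    (((4*n+3 : ℤ) ≤ pcgF n a + pcgF n b ∧ pcgF n a + pcgF n b ≤ 4*n+6) ∨
      pcgF n a + pcgF n b = pcgF n 0 + pcgF n (n-1)) := by
  rw [pcg_wrap n hn]
  unfold pcgF
  split_ifs <;> omega

theorem stmt3 (n : ℕ) (hn : 3 ≤ n) : IsStar2PCG (SimpleGraph.cycleGraph n) := by
  refine ⟨fun v => ((pcgF n v.val : ℤ) : ℝ), Set.Icc ((4*n+3 : ℤ) : ℝ) ((4*n+6 : ℤ) : ℝ),
    {((pcgF n 0 + pcgF n (n-1) : ℤ) : ℝ)}, ?_, Set.ordConnected_Icc, Set.ordConnected_singleton,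
    ?_, ?_, ?_, ?_⟩
  · intro v
    show (0:ℝ) ≤ ((pcgF n v.val : ℤ) : ℝ)
    exact_mod_cast pcgF_nonneg n v.val v.isLt
  · intro x hx
    rw [Set.mem_Icc] at hx
    have h0 : ((0:ℤ):ℝ) ≤ ((4*n+3 : ℤ) : ℝ) := by exact_mod_cast (by omega : (0:ℤ) ≤ 4*n+3)
    exact le_trans (by simpa using h0) hx.1
  · intro x hx
    rw [Set.mem_singleton_iff] at hx
    subst hx
    have : (0:ℤ) ≤ pcgF n 0 + pcgF n (n-1) :=
      add_nonneg (pcgF_nonneg n 0 (by omega)) (pcgF_nonneg n (n-1) (by omega))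
    simp only [Set.mem_Ici]
    exact_mod_cast this
  · rw [Set.disjoint_singleton_right]
    intro hx
    rw [Set.mem_Icc] at hx
    have h4 : (4*n+3 : ℤ) ≤ pcgF n 0 + pcgF n (n-1) ∧ pcgF n 0 + pcgF n (n-1) ≤ 4*n+6 :=
      ⟨by exact_mod_cast hx.1, by exact_mod_cast hx.2⟩
    rw [pcg_wrap n hn] at h4
    split_ifs at h4 <;> omega
  · intro a b hab
    have hne : a.val ≠ b.val := fun h => hab (Fin.ext h)
    have hadj : (SimpleGraph.cycleGraph n).Adj a b ↔
        (b.val = a.val + 1 ∨ a.val = b.val + 1 ∨ (a.val = 0 ∧ b.val = n-1) ∨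
          (b.val = 0 ∧ a.val = n-1)) := by
      rw [SimpleGraph.cycleGraph_adj']
      rw [Fin.sub_def, Fin.sub_def]
      simp only [Fin.val_mk]
      have hav := a.isLt
      have hbv := b.isLt
      rw [mod_helper n _ (by omega) (by omega), mod_helper n _ (by omega) (by omega)]
      omega
    rw [hadj, key n a.val b.val hn a.isLt b.isLt hne]
    simp only [Set.mem_union, Set.mem_Icc, Set.mem_singleton_iff]
    constructor
    · rintro (⟨h1, h2⟩ | h1)
      · exact Or.inl ⟨by exact_mod_cast h1, by exact_mod_cast h2⟩
      · exact Or.inr (by exact_mod_cast h1)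
    · rintro (⟨h1, h2⟩ | h1)
      · exact Or.inl ⟨by exact_mod_cast h1, by exact_mod_cast h2⟩
      · exact Or.inr (by exact_mod_cast h1)
end

section
/- Let n ≥ 4 be an even integer. Define w : {1,…,n} → ℝ by w(i) = n + n/2 − (i−1)/2 if i is odd, and w(i) = i/2 if i is even. Let I_1 = [n + n/2, n + n/2 + 1] and I_2 = {2n}. Then for all 1 ≤ i < j ≤ n, w(i)+w(j) ∈ I_1 ∪ I_2 if and only if j = i+1 or (i = 1 and j = n). Hence the cycle C_n (n even) is a star-2-PCG. -/
lemma cycle_adj_lt {n : ℕ} (hn : 2 ≤ n) (u v : Fin n) (huv : u.val < v.val) :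
    (SimpleGraph.cycleGraph n).Adj u v ↔
      v.val = u.val + 1 ∨ (u.val = 0 ∧ v.val = n - 1) := by
  rw [SimpleGraph.cycleGraph_adj']
  have hu := u.isLt
  have hv := v.isLt
  rw [Fin.sub_def, Fin.sub_def]
  simp only []
  have h1 : (n - v.val + u.val) % n = n - v.val + u.val := by
    apply Nat.mod_eq_of_lt; omega
  have h2 : (n - u.val + v.val) % n = (v.val - u.val) := by
    have h : n - u.val + v.val = n + (v.val - u.val) := by omega
    rw [h, Nat.add_mod_left, Nat.mod_eq_of_lt]; omega
  rw [h1, h2]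
  omega

theorem stmt4 (n : ℕ) (hn : 4 ≤ n) (hne : Even n) (w : ℕ → ℝ)
    (hw : ∀ i, w i = if Odd i then (n : ℝ) + n / 2 - ((i : ℝ) - 1) / 2 else (i : ℝ) / 2) :
    (∀ i j : ℕ, 1 ≤ i → i < j → j ≤ n →
      (w i + w j ∈ Set.Icc ((n : ℝ) + n / 2) ((n : ℝ) + n / 2 + 1) ∪ {(2 * n : ℝ)} ↔
        j = i + 1 ∨ (i = 1 ∧ j = n))) ∧
    IsStar2PCG (SimpleGraph.cycleGraph n) := by
  obtain ⟨m, hm⟩ := hne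
  have hm2 : 2 ≤ m := by omega
  have hnm : (n : ℝ) = 2 * m := by rw [hm]; push_cast; ring
  have key : ∀ i j : ℕ, 1 ≤ i → i < j → j ≤ n →
      (w i + w j ∈ Set.Icc ((n : ℝ) + n / 2) ((n : ℝ) + n / 2 + 1) ∪ {(2 * n : ℝ)} ↔
        j = i + 1 ∨ (i = 1 ∧ j = n)) := by
    intro i j hi hij hjn
    simp only [Set.mem_union, Set.mem_Icc, Set.mem_singleton_iff, hw, hnm]
    rcases Nat.even_or_odd i with hie | hio <;> rcases Nat.even_or_odd j with hje | hjo
    · -- both even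
      obtain ⟨k, rfl⟩ := hie
      obtain ⟨l, rfl⟩ := hje
      rw [if_neg (Nat.not_odd_iff_even.mpr ⟨_, rfl⟩),
          if_neg (Nat.not_odd_iff_even.mpr ⟨_, rfl⟩)]
      have hk : (k : ℝ) + 1 ≤ m := by exact_mod_cast (by omega : k + 1 ≤ m)
      have hl : (l : ℝ) ≤ m := by exact_mod_cast (by omega : l ≤ m)
      constructor
      · rintro (⟨h1, h2⟩ | h1) <;> push_cast at h1 <;> linarith
      · rintro (h | ⟨h, h'⟩) <;> omega
    · -- i even, j odd
      obtain ⟨k, rfl⟩ := hie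
      obtain ⟨l, rfl⟩ := hjo
      rw [if_neg (Nat.not_odd_iff_even.mpr ⟨_, rfl⟩),
          if_pos (by exact ⟨l, rfl⟩)]
      constructor
      · rintro (⟨h1, h2⟩ | h1)
        · push_cast at h1 h2
          have hkl : (l : ℝ) ≤ k := by linarith
          have h3 : l ≤ k := by exact_mod_cast hkl
          omega
        · push_cast at h1
          have h4 : (l : ℝ) + m = k := by linarith
          have h5 : ((l + m : ℕ) : ℝ) = (k : ℝ) := by push_cast; linarith
          have : l + m = k := by exact_mod_cast h5
          omega
      · rintro (h | ⟨h, h'⟩)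
        · left
          have hlk : l = k := by omega
          subst hlk
          constructor <;> push_cast <;> linarith
        · omega
    · -- i odd, j even
      obtain ⟨k, rfl⟩ := hio
      obtain ⟨l, rfl⟩ := hje
      rw [if_pos (by exact ⟨k, rfl⟩),
          if_neg (Nat.not_odd_iff_even.mpr ⟨_, rfl⟩)]
      constructor
      · rintro (⟨h1, h2⟩ | h1)
        · push_cast at h1 h2
          have hkl : (k : ℝ) ≤ l := by linarith
          have h3 : k ≤ l := by exact_mod_cast hkl
          have h4 : (l : ℝ) ≤ ((k + 1 : ℕ) : ℝ) := by push_cast; linarith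
          have h5 : l ≤ k + 1 := by exact_mod_cast h4
          omega
        · push_cast at h1
          have h5 : ((l : ℕ) : ℝ) = ((k + m : ℕ) : ℝ) := by push_cast; linarith
          have : l = k + m := by exact_mod_cast h5
          omega
      · rintro (h | ⟨h, h'⟩)
        · left
          have hlk : l = k + 1 := by omega
          subst hlk
          constructor <;> push_cast <;> linarith
        · right
          have hk : k = 0 := by omega
          have hl : l = m := by omega
          subst hk; subst hl
          push_cast
          ring
    · -- both odd
      obtain ⟨k, rfl⟩ := hio
      obtain ⟨l, rfl⟩ := hjo
      rw [if_pos (by exact ⟨k, rfl⟩), if_pos (by exact ⟨l, rfl⟩)]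
      have hk : (k : ℝ) + 1 ≤ l := by exact_mod_cast (by omega : k + 1 ≤ l)
      have hl : (l : ℝ) + 1 ≤ m := by exact_mod_cast (by omega : l + 1 ≤ m)
      have hmr : (2 : ℝ) ≤ m := by exact_mod_cast hm2
      constructor
      · rintro (⟨h1, h2⟩ | h1)
        · push_cast at h2; linarith
        · push_cast at h1; linarith
      · rintro (h | ⟨h, h'⟩) <;> omega
  refine ⟨key, ?_⟩
  refine ⟨fun v => w (v.val + 1), Set.Icc ((n : ℝ) + n / 2) ((n : ℝ) + n / 2 + 1),
    {(2 * n : ℝ)}, ?_, Set.ordConnected_Icc, Set.ordConnected_singleton, ?_, ?_, ?_, ?_⟩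
  · intro v
    have hv : v.val + 1 ≤ n := v.isLt
    have hvr : (v.val : ℝ) + 1 ≤ n := by exact_mod_cast hv
    show 0 ≤ w (v.val + 1)
    rw [hw]
    split
    · push_cast
      linarith
    · positivity
  · intro x hx
    simp only [Set.mem_Icc] at hx
    have h0 : (0:ℝ) ≤ n := Nat.cast_nonneg n
    exact le_trans (by linarith) hx.1
  · intro x hx
    simp only [Set.mem_singleton_iff] at hx
    subst hx
    simp only [Set.mem_Ici]
    positivity
  · rw [Set.disjoint_singleton_right]
    simp only [Set.mem_Icc, not_and_or, not_le]
    right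
    have h4 : (4 : ℝ) ≤ n := by exact_mod_cast hn
    linarith
  · intro a b hab
    have hane : a.val ≠ b.val := fun h => hab (Fin.ext h)
    rcases Nat.lt_or_ge a.val b.val with h | h
    · rw [cycle_adj_lt (by omega) a b h]
      have hb := b.isLt
      rw [key (a.val + 1) (b.val + 1) (by omega) (by omega) (by omega)]
      omega
    · have h' : b.val < a.val := by omega
      rw [SimpleGraph.adj_comm, cycle_adj_lt (by omega) b a h']
      have ha := a.isLt
      rw [show (fun v : Fin n => w (v.val + 1)) a + (fun v : Fin n => w (v.val + 1)) b
            = w (b.val + 1) + w (a.val + 1) by simp [add_comm]]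
      rw [key (b.val + 1) (a.val + 1) (by omega) (by omega) (by omega)]
      omega
end

section
/- Let n ≥ 5 be an odd integer. Define w : {1,…,n} → ℝ by w(i) = n − i if i is even, w(i) = n + i if i is odd and i ≠ n, and w(n) = n − 1. Let I_1 = [2n−1, 2n+1] and I_2 = {n}. Then for all 1 ≤ i < j ≤ n, w(i)+w(j) ∈ I_1 ∪ I_2 if and only if j = i+1 or (i = 1 and j = n). Hence the cycle C_n (n odd) is a star-2-PCG. -/
theorem aux_sub_val_gt (n : ℕ) (a b : Fin n) (h : a.val < b.val) :
    (b - a).val = b.val - a.val := by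
  have hb := b.isLt
  have e1 : n - a.val + b.val = n + (b.val - a.val) := by omega
  have e2 : b.val - a.val < n := by omega
  rw [Fin.sub_def]
  simp only [e1, Nat.add_mod_left]
  exact Nat.mod_eq_of_lt e2

theorem aux_sub_val_lt (n : ℕ) (a b : Fin n) (h : a.val < b.val) :
    (a - b).val = n - (b.val - a.val) := by
  have hb := b.isLt
  have ha := a.isLt
  have e1 : n - b.val + a.val = n - (b.val - a.val) := by omega
  have e2 : n - (b.val - a.val) < n := by omega
  rw [Fin.sub_def]
  simp only [e1]
  exact Nat.mod_eq_of_lt e2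

theorem aux_key (n : ℕ) (hn : 5 ≤ n) (hno : Odd n) (w : ℕ → ℝ)
    (hw : ∀ i, w i =
      if i = n then (n : ℝ) - 1
      else if Odd i then (n : ℝ) + i
      else (n : ℝ) - i) :
    ∀ i j : ℕ, 1 ≤ i → i < j → j ≤ n →
      (w i + w j ∈ Set.Icc (2 * (n : ℝ) - 1) (2 * (n : ℝ) + 1) ∪ {(n : ℝ)} ↔
        j = i + 1 ∨ (i = 1 ∧ j = n)) := by
  obtain ⟨m, hm⟩ := hno
  intro i j hi hij hjn
  have hine : i ≠ n := by omega
  rw [hw i, hw j, Set.mem_union, Set.mem_Icc, Set.mem_singleton_iff, if_neg hine]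
  rcases eq_or_lt_of_le hjn with hjeq | hlt
  · rw [if_pos hjeq]
    rcases Nat.even_or_odd i with ⟨a, ha⟩ | ⟨a, ha⟩
    · rw [if_neg (by simp [Nat.not_odd_iff_even.mpr ⟨a, ha⟩] : ¬ Odd i)]
      constructor
      · rintro (⟨h1, h2⟩ | h3)
        · have h1' : 2*(n:ℤ)-1 ≤ ((n:ℤ) - i) + ((n:ℤ) - 1) := by exact_mod_cast h1
          omega
        · have h3' : ((n:ℤ) - i) + ((n:ℤ) - 1) = (n:ℤ) := by exact_mod_cast h3
          omega
      · rintro (hji | ⟨hi1, -⟩)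
        · right
          have hin : i + 1 = n := by omega
          have : ((i:ℝ)) + 1 = n := by exact_mod_cast hin
          linarith
        · exfalso; omega
    · rw [if_pos ⟨a, by omega⟩]
      constructor
      · rintro (⟨h1, h2⟩ | h3)
        · have h2' : ((n:ℤ) + i) + ((n:ℤ) - 1) ≤ 2*(n:ℤ)+1 := by exact_mod_cast h2
          omega
        · have h3' : ((n:ℤ) + i) + ((n:ℤ) - 1) = (n:ℤ) := by exact_mod_cast h3
          omega
      · rintro (hji | ⟨hi1, -⟩)
        · exfalso; omega
        · subst hi1
          left
          constructor <;> push_cast <;> linarith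
  · rw [if_neg (by omega : j ≠ n)]
    rcases Nat.even_or_odd i with ⟨a, ha⟩ | ⟨a, ha⟩ <;>
      rcases Nat.even_or_odd j with ⟨b, hb⟩ | ⟨b, hb⟩
    · -- i even, j even
      rw [if_neg (by simp [Nat.not_odd_iff_even.mpr ⟨a, ha⟩] : ¬ Odd i),
        if_neg (by simp [Nat.not_odd_iff_even.mpr ⟨b, hb⟩] : ¬ Odd j)]
      constructor
      · rintro (⟨h1, h2⟩ | h3)
        · have h1' : 2*(n:ℤ)-1 ≤ ((n:ℤ) - i) + ((n:ℤ) - j) := by exact_mod_cast h1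
          omega
        · have h3' : ((n:ℤ) - i) + ((n:ℤ) - j) = (n:ℤ) := by exact_mod_cast h3
          omega
      · rintro (hji | ⟨hi1, hjn2⟩) <;> exfalso <;> omega
    · -- i even, j odd
      rw [if_neg (by simp [Nat.not_odd_iff_even.mpr ⟨a, ha⟩] : ¬ Odd i),
        if_pos ⟨b, by omega⟩]
      constructor
      · rintro (⟨h1, h2⟩ | h3)
        · have h2' : ((n:ℤ) - i) + ((n:ℤ) + j) ≤ 2*(n:ℤ)+1 := by exact_mod_cast h2
          omega
        · have h3' : ((n:ℤ) - i) + ((n:ℤ) + j) = (n:ℤ) := by exact_mod_cast h3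
          omega
      · rintro (hji | ⟨hi1, hjn2⟩)
        · subst hji
          left
          constructor <;> push_cast <;> linarith
        · exfalso; omega
    · -- i odd, j even
      rw [if_pos ⟨a, by omega⟩,
        if_neg (by simp [Nat.not_odd_iff_even.mpr ⟨b, hb⟩] : ¬ Odd j)]
      constructor
      · rintro (⟨h1, h2⟩ | h3)
        · have h1' : 2*(n:ℤ)-1 ≤ ((n:ℤ) + i) + ((n:ℤ) - j) := by exact_mod_cast h1
          omega
        · have h3' : ((n:ℤ) + i) + ((n:ℤ) - j) = (n:ℤ) := by exact_mod_cast h3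
          omega
      · rintro (hji | ⟨hi1, hjn2⟩)
        · subst hji
          left
          constructor <;> push_cast <;> linarith
        · exfalso; omega
    · -- i odd, j odd
      rw [if_pos ⟨a, by omega⟩, if_pos ⟨b, by omega⟩]
      constructor
      · rintro (⟨h1, h2⟩ | h3)
        · have h2' : ((n:ℤ) + i) + ((n:ℤ) + j) ≤ 2*(n:ℤ)+1 := by exact_mod_cast h2
          omega
        · have h3' : ((n:ℤ) + i) + ((n:ℤ) + j) = (n:ℤ) := by exact_mod_cast h3
          omega
      · rintro (hji | ⟨hi1, hjn2⟩) <;> exfalso <;> omega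

theorem stmt5 (n : ℕ) (hn : 5 ≤ n) (hno : Odd n) (w : ℕ → ℝ)
    (hw : ∀ i, w i =
      if i = n then (n : ℝ) - 1
      else if Odd i then (n : ℝ) + i
      else (n : ℝ) - i) :
    (∀ i j : ℕ, 1 ≤ i → i < j → j ≤ n →
      (w i + w j ∈ Set.Icc (2 * (n : ℝ) - 1) (2 * (n : ℝ) + 1) ∪ {(n : ℝ)} ↔
        j = i + 1 ∨ (i = 1 ∧ j = n))) ∧
    IsStar2PCG (SimpleGraph.cycleGraph n) := by
  have hkey := aux_key n hn hno w hw
  have h5 : (5:ℝ) ≤ n := by exact_mod_cast hn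
  refine ⟨hkey, fun v => w (v.val + 1),
    Set.Icc (2 * (n : ℝ) - 1) (2 * (n : ℝ) + 1), {(n : ℝ)}, ?_, ?_, ?_, ?_, ?_, ?_, ?_⟩
  · intro v
    show 0 ≤ w (v.val + 1)
    have hv := v.isLt
    rw [hw]
    split_ifs with h1 h2
    · linarith
    · have : (0:ℝ) ≤ (v.val + 1 : ℕ) := by positivity
      push_cast at this ⊢
      linarith
    · have hle : ((v.val + 1 : ℕ) : ℝ) ≤ n := by exact_mod_cast Nat.succ_le_of_lt hv
      push_cast at hle ⊢
      linarith
  · exact Set.ordConnected_Icc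
  · exact Set.ordConnected_singleton
  · intro x hx
    simp only [Set.mem_Icc] at hx
    simp only [Set.mem_Ici]
    linarith [hx.1]
  · intro x hx
    simp only [Set.mem_singleton_iff] at hx
    simp only [Set.mem_Ici]
    linarith [hx.le]
  · rw [Set.disjoint_singleton_right]
    simp only [Set.mem_Icc, not_and]
    intro hcontra
    linarith
  · have main : ∀ a b : Fin n, a.val < b.val →
        ((SimpleGraph.cycleGraph n).Adj a b ↔
          w (a.val + 1) + w (b.val + 1) ∈
            Set.Icc (2 * (n : ℝ) - 1) (2 * (n : ℝ) + 1) ∪ {(n : ℝ)}) := by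
      intro a b hab
      have hb := b.isLt
      rw [SimpleGraph.cycleGraph_adj', aux_sub_val_gt n a b hab, aux_sub_val_lt n a b hab,
        hkey (a.val + 1) (b.val + 1) (by omega) (by omega) (by omega)]
      omega
    intro a b hne
    show _ ↔ w (a.val + 1) + w (b.val + 1) ∈ _
    rcases lt_trichotomy a.val b.val with h | h | h
    · exact main a b h
    · exact absurd (Fin.ext h) hne
    · rw [SimpleGraph.adj_comm, add_comm (w (a.val + 1))]
      exact main b a h
end

section
/- For any positive integer n_1, the 2-dimensional grid graph G_{n_1,2} (vertex set {0,…,n_1−1} × {0,1}, vertices adjacent iff they differ by exactly 1 in exactly one coordinate) is a star-1-PCG. -/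
/-- The 2-dimensional grid graph on `Fin n₁ × Fin n₂`: two vertices are adjacent
iff they differ by exactly 1 in exactly one coordinate. -/
def gridGraph (n₁ n₂ : ℕ) : SimpleGraph (Fin n₁ × Fin n₂) where
  Adj u v := |(u.1 : ℤ) - v.1| + |(u.2 : ℤ) - v.2| = 1
  symm := ⟨by intro u v h; simpa [abs_sub_comm] using h⟩
  loopless := ⟨by intro u h; simp at h⟩

/-!
Give the vertex `(i, j)` of the ladder the signed weight `±(-1)ⁱ (i + 1)`, with sign `+` in
row `0` and `-` in row `1`; the first row thus reads `1, -2, 3, -4, …`. Two weights of the same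
row sum to `±|i - i'|` when `i, i'` have different parities and to `±(i + i' + 2)` otherwise,
and two weights of different rows sum to `±(i - i')` or `±(i + i' + 2)` in the same way. Hence
two vertices are adjacent exactly when their weights sum into `[-1, 1]`. Shifting all weights
by a common constant makes them nonnegative and moves the interval accordingly.
-/

theorem isStar1PCG_of_adj_iff_add_mem {V : Type*} {G : SimpleGraph V}
    (w : V → ℝ) (hw : BddBelow (Set.range w)) {I : Set ℝ} (hI : I.OrdConnected)
    (hadj : ∀ a b, a ≠ b → (G.Adj a b ↔ w a + w b ∈ I)) : IsStar1PCG G := by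
  obtain ⟨c, hc⟩ := hw
  have hc' : ∀ v, c ≤ w v := fun v => hc ⟨v, rfl⟩
  refine ⟨fun v => w v - c, (· + 2 * c) ⁻¹' I ∩ Set.Ici 0, fun v => sub_nonneg.2 (hc' v),
    (hI.preimage_mono fun _ _ h => by simpa using h).inter Set.ordConnected_Ici,
    Set.inter_subset_right, fun a b hab => ?_⟩
  have hnonneg : 0 ≤ w a - c + (w b - c) := by linarith [hc' a, hc' b]
  simp only [hadj a b hab, Set.mem_inter_iff, Set.mem_preimage, Set.mem_Ici, hnonneg, and_true]
  ring_nf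

def alternatingWeight (i : ℕ) : ℤ := (-1) ^ i * (i + 1)

theorem alternatingWeight_two_mul (k : ℕ) : alternatingWeight (2 * k) = 2 * k + 1 := by
  simp [alternatingWeight, pow_mul]

theorem alternatingWeight_two_mul_add_one (k : ℕ) :
    alternatingWeight (2 * k + 1) = -(2 * k + 2) := by
  rw [alternatingWeight, pow_succ, pow_mul, neg_one_sq, one_pow]
  push_cast
  ring

theorem abs_alternatingWeight_add_le_one_iff (i i' : ℕ) :
    |alternatingWeight i + alternatingWeight i'| ≤ 1 ↔ |(i : ℤ) - i'| = 1 := by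
  rw [abs_le, abs_eq zero_le_one]
  obtain ⟨k, rfl | rfl⟩ := Nat.even_or_odd' i <;>
    obtain ⟨k', rfl | rfl⟩ := Nat.even_or_odd' i' <;>
    simp only [alternatingWeight_two_mul, alternatingWeight_two_mul_add_one] <;> omega

theorem abs_alternatingWeight_sub_le_one_iff (i i' : ℕ) :
    |alternatingWeight i - alternatingWeight i'| ≤ 1 ↔ i = i' := by
  rw [abs_le]
  obtain ⟨k, rfl | rfl⟩ := Nat.even_or_odd' i <;>
    obtain ⟨k', rfl | rfl⟩ := Nat.even_or_odd' i' <;>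
    simp only [alternatingWeight_two_mul, alternatingWeight_two_mul_add_one] <;> omega

def ladderWeight {n : ℕ} : Fin n × Fin 2 → ℤ
  | (i, 0) => alternatingWeight i
  | (i, 1) => -alternatingWeight i

theorem gridGraph_two_adj_iff {n : ℕ} :
    ∀ u v : Fin n × Fin 2, (gridGraph n 2).Adj u v ↔ |ladderWeight u + ladderWeight v| ≤ 1
  | (i, 0), (i', 0) => by
    simp [gridGraph, ladderWeight, abs_alternatingWeight_add_le_one_iff]
  | (i, 0), (i', 1) => by
    simp [gridGraph, ladderWeight, ← sub_eq_add_neg, abs_alternatingWeight_sub_le_one_iff,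
      sub_eq_zero]
  | (i, 1), (i', 0) => by
    simp [gridGraph, ladderWeight, neg_add_eq_sub, abs_sub_comm,
      abs_alternatingWeight_sub_le_one_iff, sub_eq_zero]
  | (i, 1), (i', 1) => by
    simpa [gridGraph, ladderWeight, ← neg_add_rev, add_comm] using
      (abs_alternatingWeight_add_le_one_iff i i').symm

theorem stmt6_general (n₁ : ℕ) : IsStar1PCG (gridGraph n₁ 2) := by
  refine isStar1PCG_of_adj_iff_add_mem (fun v => (ladderWeight v : ℝ))
    (Set.finite_range _).bddBelow Set.ordConnected_Icc (I := Set.Icc (-1) 1) fun u v _ => ?_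
  rw [gridGraph_two_adj_iff, abs_le, Set.mem_Icc]
  norm_cast

theorem stmt6 (n₁ : ℕ) (hn₁ : 1 ≤ n₁) : IsStar1PCG (gridGraph n₁ 2) :=
  stmt6_general n₁
end

section
/- For any integers n_1, n_2 ≥ 3, the 2-dimensional grid graph G_{n_1,n_2} is not a star-1-PCG. -/
/-!
If `x ~ y` and `u ~ v` but `x ≁ v` in a star-1-PCG, then `w x + w v` lies outside the interval
while `w x + w y` and `w u + w v` lie inside it, so it is smaller or larger than both; hence
`w x - w u` and `w v - w y` are nonzero of the same sign. In the 3 × 3 grid with centre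
`e = (1,1)`, the induced paths through `e` from the corners `(0,0)` and `(2,0)` to `(1,2)` force
`w (0,0) - w e` and `w (2,0) - w e` to have the same sign, while those to `(2,1)` and `(0,1)`
force opposite signs. Every larger grid contains the 3 × 3 grid as an induced subgraph.
-/

theorem Set.OrdConnected.lt_and_lt_or_lt_and_lt_of_notMem {α : Type*} [LinearOrder α]
    {I : Set α} (hI : I.OrdConnected) {s t₁ t₂ : α} (hs : s ∉ I) (ht₁ : t₁ ∈ I) (ht₂ : t₂ ∈ I) :
    s < t₁ ∧ s < t₂ ∨ t₁ < s ∧ t₂ < s := by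
  rcases (ne_of_mem_of_not_mem ht₁ hs).lt_or_gt with h₁ | h₁ <;>
    rcases (ne_of_mem_of_not_mem ht₂ hs).lt_or_gt with h₂ | h₂
  · exact .inr ⟨h₁, h₂⟩
  · exact absurd (hI.out ht₁ ht₂ ⟨h₁.le, h₂.le⟩) hs
  · exact absurd (hI.out ht₂ ht₁ ⟨h₂.le, h₁.le⟩) hs
  · exact .inl ⟨h₁, h₂⟩

namespace IsStar1PCG

theorem of_embedding {V W : Type*} {G : SimpleGraph V} {H : SimpleGraph W} (f : H ↪g G)
    (hG : IsStar1PCG G) : IsStar1PCG H := by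
  obtain ⟨w, I, hw, hI, hI₀, hadj⟩ := hG
  refine ⟨w ∘ f, I, fun v => hw (f v), hI, hI₀, fun a b hab => ?_⟩
  rw [← f.map_adj_iff]
  exact hadj (f a) (f b) (f.injective.ne hab)

theorem weight_lt_and_lt_or_lt_and_lt {V : Type*} {G : SimpleGraph V} {w : V → ℝ} {I : Set ℝ}
    (hI : I.OrdConnected) (hadj : ∀ a b : V, a ≠ b → (G.Adj a b ↔ w a + w b ∈ I))
    {x y u v : V} (hxy : G.Adj x y) (huv : G.Adj u v) (hxv : x ≠ v) (hnxv : ¬ G.Adj x v) :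
    w x < w u ∧ w v < w y ∨ w u < w x ∧ w y < w v := by
  have hs : w x + w v ∉ I := fun h => hnxv ((hadj x v hxv).2 h)
  rcases hI.lt_and_lt_or_lt_and_lt_of_notMem hs ((hadj x y hxy.ne).1 hxy)
    ((hadj u v huv.ne).1 huv) with ⟨h₁, h₂⟩ | ⟨h₁, h₂⟩
  · exact .inl ⟨by linarith, by linarith⟩
  · exact .inr ⟨by linarith, by linarith⟩

end IsStar1PCG

def gridGraph.embeddingOfLE {m₁ m₂ n₁ n₂ : ℕ} (h₁ : m₁ ≤ n₁) (h₂ : m₂ ≤ n₂) :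
    gridGraph m₁ m₂ ↪g gridGraph n₁ n₂ where
  toEmbedding := (Fin.castLEEmb h₁).prodMap (Fin.castLEEmb h₂)
  map_rel_iff' := by simp [gridGraph]

instance (n₁ n₂ : ℕ) : DecidableRel (gridGraph n₁ n₂).Adj := fun u v =>
  inferInstanceAs (Decidable (|(u.1 : ℤ) - v.1| + |(u.2 : ℤ) - v.2| = 1))

theorem not_isStar1PCG_gridGraph_three_three : ¬ IsStar1PCG (gridGraph 3 3) := by
  rintro ⟨w, I, -, hI, -, hadj⟩
  have path (x y u v : Fin 3 × Fin 3) (hxy : (gridGraph 3 3).Adj x y)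
      (huv : (gridGraph 3 3).Adj u v) (hxv : x ≠ v) (hnxv : ¬ (gridGraph 3 3).Adj x v) :=
    IsStar1PCG.weight_lt_and_lt_or_lt_and_lt hI hadj hxy huv hxv hnxv
  have h₁ := path (0, 0) (1, 0) (1, 1) (1, 2) (by decide) (by decide) (by decide) (by decide)
  have h₂ := path (2, 0) (1, 0) (1, 1) (1, 2) (by decide) (by decide) (by decide) (by decide)
  have h₃ := path (0, 0) (0, 1) (1, 1) (2, 1) (by decide) (by decide) (by decide) (by decide)
  have h₄ := path (2, 0) (2, 1) (1, 1) (0, 1) (by decide) (by decide) (by decide) (by decide)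
  rcases h₁ with ⟨_, _⟩ | ⟨_, _⟩ <;> rcases h₂ with ⟨_, _⟩ | ⟨_, _⟩ <;>
    rcases h₃ with ⟨_, _⟩ | ⟨_, _⟩ <;> rcases h₄ with ⟨_, _⟩ | ⟨_, _⟩ <;> linarith

theorem stmt8 (n₁ n₂ : ℕ) (hn₁ : 3 ≤ n₁) (hn₂ : 3 ≤ n₂) :
    ¬ IsStar1PCG (gridGraph n₁ n₂) := fun h =>
  not_isStar1PCG_gridGraph_three_three (h.of_embedding (gridGraph.embeddingOfLE hn₁ hn₂))
end

section
/- For any positive integers n_1, n_2, the 2-dimensional grid graph G_{n_1,n_2} is a star-2-PCG. -/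
open Set

theorem isStar2PCG_of_bool_coloring {V : Type*} {G : SimpleGraph V}
    (col : G.Coloring Bool) (u : V → ℝ) {m c : ℝ} (hm : 0 ≤ m) (hmc : m ≤ c)
    (hu : ∀ v, u v ∈ Icc m c) {J₁ J₂ : Set ℝ} (hJ₁ : J₁.OrdConnected)
    (hJ₂ : J₂.OrdConnected) (hJ : Disjoint J₁ J₂) (hJm : J₁ ∪ J₂ ⊆ Ioo (-2 * m) (2 * m))
    (hadj : ∀ a b, col a = true → col b = false → (G.Adj a b ↔ u a - u b ∈ J₁ ∪ J₂)) :
    IsStar2PCG G := by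
  set w : V → ℝ := fun v => if col v then c + u v else c - u v
  have hshift : ∀ J : Set ℝ, J ⊆ J₁ ∪ J₂ → (· - 2 * c) ⁻¹' J ⊆ Ici 0 := fun J hJ x hx => by
    have := (hJm (hJ hx)).1
    simp only [mem_Ici]
    linarith
  have hsame : ∀ a b, col a = col b → ¬G.Adj a b ∧ w a + w b - 2 * c ∉ J₁ ∪ J₂ := by
    intro a b hab
    refine ⟨fun h => col.valid h hab, fun hJw => ?_⟩
    obtain ⟨hlo, hhi⟩ := hJm hJw
    obtain ⟨ha, -⟩ := hu a
    obtain ⟨hb, -⟩ := hu b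
    cases h : col a <;>
      simp only [w, ← hab, h, Bool.false_eq_true, ↓reduceIte] at hlo hhi <;> linarith
  refine ⟨w, (· - 2 * c) ⁻¹' J₁, (· - 2 * c) ⁻¹' J₂, fun v => ?_,
    hJ₁.preimage_mono fun _ _ h => by simpa using h,
    hJ₂.preimage_mono fun _ _ h => by simpa using h,
    hshift J₁ subset_union_left, hshift J₂ subset_union_right, hJ.preimage _, fun a b _ => ?_⟩
  · obtain ⟨hv₁, hv₂⟩ := hu v
    simp only [w]
    split_ifs <;> linarith
  · rw [← preimage_union, mem_preimage]
    cases ha : col a <;> cases hb : col b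
    · exact (hsame a b (ha.trans hb.symm)).elim iff_of_false
    · have hw : w a + w b - 2 * c = u b - u a := by
        simp only [w, ha, hb, Bool.false_eq_true, ↓reduceIte]; ring
      rw [G.adj_comm, hw, hadj b a hb ha]
    · have hw : w a + w b - 2 * c = u a - u b := by
        simp only [w, ha, hb, Bool.false_eq_true, ↓reduceIte]; ring
      rw [hw, hadj a b ha hb]
    · exact (hsame a b (ha.trans hb.symm)).elim iff_of_false

theorem Int.mul_add_mem_Icc_iff {N s d : ℤ} (hd : |d| ≤ N - 2) :
    N * s + d ∈ Icc (N - 1) (N + 1) ↔ s = 1 ∧ |d| ≤ 1 := by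
  obtain ⟨hd₁, hd₂⟩ := abs_le.mp hd
  rw [mem_Icc, abs_le]
  constructor
  · rintro ⟨h₁, h₂⟩
    obtain rfl : s = 1 := by
      rcases (by omega : s ≤ 0 ∨ s = 1 ∨ 2 ≤ s) with hs | hs | hs
      · nlinarith
      · exact hs
      · nlinarith
    omega
  · rintro ⟨rfl, h⟩
    omega

theorem Int.mul_add_mem_Icc_neg_iff {N s d : ℤ} (hd : |d| ≤ N - 2) :
    N * s + d ∈ Icc (-N - 1) (-N + 1) ↔ s = -1 ∧ |d| ≤ 1 := by
  have key := Int.mul_add_mem_Icc_iff (N := N) (s := -s) (d := -d) (by rwa [abs_neg])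
  rw [abs_neg, neg_eq_iff_eq_neg, mem_Icc] at key
  rw [← key, mem_Icc]
  constructor <;> rintro ⟨h₁, h₂⟩ <;> constructor <;> linarith

theorem Int.abs_add_abs_eq_one_iff {x y : ℤ} (h : Odd (x + y)) :
    |x| + |y| = 1 ↔ (x + y = 1 ∨ x + y = -1) ∧ |x - y| ≤ 1 := by
  obtain ⟨k, hk⟩ := h
  rcases abs_cases x with ⟨h₁, h₂⟩ | ⟨h₁, h₂⟩ <;> rcases abs_cases y with ⟨h₃, h₄⟩ | ⟨h₃, h₄⟩ <;>
    rcases abs_cases (x - y) with ⟨h₅, h₆⟩ | ⟨h₅, h₆⟩ <;> omega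

namespace gridGraph

variable {n₁ n₂ : ℕ}

def parityColoring (n₁ n₂ : ℕ) : (gridGraph n₁ n₂).Coloring Bool :=
  SimpleGraph.Coloring.mk (fun v => decide (Even ((v.1 : ℕ) + v.2))) fun {a b} h => by
    change |(a.1 : ℤ) - b.1| + |(a.2 : ℤ) - b.2| = 1 at h
    simp only [ne_eq, decide_eq_decide, Nat.even_iff]
    rcases abs_cases ((a.1 : ℤ) - b.1) with ⟨h₁, h₂⟩ | ⟨h₁, h₂⟩ <;>
      rcases abs_cases ((a.2 : ℤ) - b.2) with ⟨h₃, h₄⟩ | ⟨h₃, h₄⟩ <;> omega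

def potential (n₁ n₂ : ℕ) (v : Fin n₁ × Fin n₂) : ℤ :=
  (n₁ + n₂) * (v.1 + v.2) + (v.1 - v.2) + 2 * (n₁ + n₂)

lemma potential_mem_Icc (v : Fin n₁ × Fin n₂) :
    potential n₁ n₂ v ∈ Icc (n₁ + n₂ : ℤ) ((n₁ + n₂) * (n₁ + n₂) + (n₁ + n₂)) := by
  have hi := v.1.isLt
  have hj := v.2.isLt
  constructor <;> unfold potential <;> nlinarith

lemma potential_sub (a b : Fin n₁ × Fin n₂) :
    potential n₁ n₂ a - potential n₁ n₂ b =
      (n₁ + n₂) * ((a.1 - b.1 : ℤ) + (a.2 - b.2)) + ((a.1 - b.1 : ℤ) - (a.2 - b.2)) := by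
  unfold potential
  ring

lemma adj_iff_potential_sub_mem {a b : Fin n₁ × Fin n₂}
    (ha : parityColoring n₁ n₂ a = true) (hb : parityColoring n₁ n₂ b = false) :
    (gridGraph n₁ n₂).Adj a b ↔ potential n₁ n₂ a - potential n₁ n₂ b ∈
      Icc (-(n₁ + n₂ : ℤ) - 1) (-(n₁ + n₂ : ℤ) + 1) ∪ Icc ((n₁ + n₂ : ℤ) - 1) (n₁ + n₂ + 1) := by
  simp only [parityColoring, SimpleGraph.Coloring.mk, RelHom.coeFn_mk, decide_eq_true_eq,
    decide_eq_false_iff_not, Nat.even_iff] at ha hb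
  have hodd : Odd ((a.1 - b.1 : ℤ) + (a.2 - b.2)) := by
    rw [Int.odd_iff]
    omega
  have hd : |(a.1 - b.1 : ℤ) - (a.2 - b.2)| ≤ n₁ + n₂ - 2 := by
    have := a.1.isLt; have := a.2.isLt; have := b.1.isLt; have := b.2.isLt
    exact abs_le.mpr ⟨by omega, by omega⟩
  rw [potential_sub, mem_union, Int.mul_add_mem_Icc_neg_iff hd, Int.mul_add_mem_Icc_iff hd]
  change |(a.1 : ℤ) - b.1| + |(a.2 : ℤ) - b.2| = 1 ↔ _
  rw [Int.abs_add_abs_eq_one_iff hodd]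
  tauto

end gridGraph

theorem stmt11 (n₁ n₂ : ℕ) (hn₁ : 1 ≤ n₁) (hn₂ : 1 ≤ n₂) :
    IsStar2PCG (gridGraph n₁ n₂) := by
  set N : ℤ := n₁ + n₂
  have hN : (2 : ℝ) ≤ N := by exact_mod_cast (show 2 ≤ N by omega)
  refine isStar2PCG_of_bool_coloring (gridGraph.parityColoring n₁ n₂)
    (fun v => gridGraph.potential n₁ n₂ v) (m := N) (c := N * N + N)
    (J₁ := Icc (-N - 1) (-N + 1)) (J₂ := Icc (N - 1) (N + 1)) (by linarith) (by nlinarith)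
    (fun v => ?_) ordConnected_Icc ordConnected_Icc ?_ ?_ fun a b ha hb => ?_
  · obtain ⟨h₁, h₂⟩ := gridGraph.potential_mem_Icc v
    exact ⟨by exact_mod_cast h₁, by exact_mod_cast h₂⟩
  · exact disjoint_left.mpr fun x h₁ h₂ => by linarith [h₁.2, h₂.1]
  · exact union_subset (Icc_subset_Ioo (by linarith) (by linarith))
      (Icc_subset_Ioo (by linarith) (by linarith))
  · rw [gridGraph.adj_iff_potential_sub_mem ha hb, ← Int.cast_sub]
    simp only [mem_union, mem_Icc]
    norm_cast
end

section
/- Let h ≥ 2 and w on {0,…,h−1}² with w(i,j) = (i+j−1)h/2 + i + 1 if i+j is odd and w(i,j) = (2h−1)h − (i+j)h/2 − i if i+j is even. If (i,j) ≠ (i',j') and i+j, i'+j' are both odd, then w(i,j) + w(i',j') < 2h(h−1); if both i+j and i'+j' are even, then w(i,j) + w(i',j') > 2h(h−1) + 2. -/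
lemma lemOdd (h i j : ℕ) (hh : 2 ≤ h) (hi : i < h) (hj : j < h)
    (ho : Odd (i + j)) :
    ((i : ℝ) + j - 1) * h / 2 + i + 1 ≤ (h : ℝ) * h - h := by
  obtain ⟨k, hk⟩ := ho
  have h1 : k + 2 ≤ h := by omega
  have h2 : i + 1 ≤ h := hi
  have e : (i : ℝ) + j = 2 * k + 1 := by exact_mod_cast congrArg (Nat.cast : ℕ → ℝ) hk
  have c1 : (k : ℝ) + 2 ≤ h := by exact_mod_cast h1
  have c2 : (i : ℝ) + 1 ≤ h := by exact_mod_cast h2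
  rw [e]
  ring_nf
  nlinarith [c1, c2, hh]

lemma lemOdd' (h i j : ℕ) (hh : 2 ≤ h) (hi : i < h) (hj : j < h)
    (ho : Odd (i + j)) (hne : ¬(i = h - 1 ∧ j = h - 2)) :
    ((i : ℝ) + j - 1) * h / 2 + i + 1 ≤ (h : ℝ) * h - h - 1 := by
  obtain ⟨k, hk⟩ := ho
  have e : (i : ℝ) + j = 2 * k + 1 := by exact_mod_cast congrArg (Nat.cast : ℕ → ℝ) hk
  rw [e]
  have hcase : (k + 3 ≤ h) ∨ (k + 2 = h ∧ i + 2 ≤ h) := by omega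
  have c2 : (i : ℝ) + 1 ≤ h := by exact_mod_cast hi
  have chh : (2:ℝ) ≤ h := by exact_mod_cast hh
  rcases hcase with hc | ⟨hc1, hc2⟩
  · have c1 : (k : ℝ) + 3 ≤ h := by exact_mod_cast hc
    nlinarith [c1, c2, chh]
  · have c1 : (k : ℝ) + 2 = h := by exact_mod_cast hc1
    have c3 : (i : ℝ) + 2 ≤ h := by exact_mod_cast hc2
    nlinarith [c1, c3, chh]

lemma lemEven (h i j : ℕ) (hh : 2 ≤ h) (hi : i < h) (hj : j < h)
    (ho : Even (i + j)) :
    (2 * (h : ℝ) - 1) * h - ((i : ℝ) + j) * h / 2 - i ≥ (h : ℝ) * h - h + 1 := by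
  obtain ⟨k, hk⟩ := ho
  have e : (i : ℝ) + j = 2 * k := by
    have : i + j = 2 * k := by omega
    exact_mod_cast congrArg (Nat.cast : ℕ → ℝ) this
  rw [e]
  have h1 : k + 1 ≤ h := by omega
  have c1 : (k : ℝ) + 1 ≤ h := by exact_mod_cast h1
  have c2 : (i : ℝ) + 1 ≤ h := by exact_mod_cast hi
  nlinarith [c1, c2]

lemma lemEven' (h i j : ℕ) (hh : 2 ≤ h) (hi : i < h) (hj : j < h)
    (ho : Even (i + j)) (hne : ¬(i = h - 1 ∧ j = h - 1)) :
    (2 * (h : ℝ) - 1) * h - ((i : ℝ) + j) * h / 2 - i ≥ (h : ℝ) * h - h + 2 := by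
  obtain ⟨k, hk⟩ := ho
  have e : (i : ℝ) + j = 2 * k := by
    have : i + j = 2 * k := by omega
    exact_mod_cast congrArg (Nat.cast : ℕ → ℝ) this
  rw [e]
  have h1 : k + 2 ≤ h := by omega
  have c1 : (k : ℝ) + 2 ≤ h := by exact_mod_cast h1
  have c2 : (i : ℝ) + 1 ≤ h := by exact_mod_cast hi
  have chh : (2:ℝ) ≤ h := by exact_mod_cast hh
  nlinarith [c1, c2, chh]

theorem stmt13 (h : ℕ) (hh : 2 ≤ h) (w : ℕ → ℕ → ℝ)
    (hw : ∀ i j : ℕ, w i j =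
      if Odd (i + j) then ((i : ℝ) + j - 1) * h / 2 + i + 1
      else (2 * (h : ℝ) - 1) * h - ((i : ℝ) + j) * h / 2 - i) :
    ∀ i j i' j' : ℕ, i < h → j < h → i' < h → j' < h → (i, j) ≠ (i', j') →
      (Odd (i + j) → Odd (i' + j') → w i j + w i' j' < 2 * (h : ℝ) * (h - 1)) ∧
      (Even (i + j) → Even (i' + j') → w i j + w i' j' > 2 * (h : ℝ) * (h - 1) + 2) := by
  intro i j i' j' hi hj hi' hj' hne
  have hne' : ¬(i = i' ∧ j = j') := by
    intro ⟨a, b⟩; exact hne (by rw [a, b])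
  have hgoal : (2 : ℝ) * h * (h - 1) = 2 * ((h : ℝ) * h - h) := by ring
  constructor
  · intro ho ho'
    rw [hw i j, hw i' j', if_pos ho, if_pos ho', hgoal]
    have key : ¬(i = h - 1 ∧ j = h - 2) ∨ ¬(i' = h - 1 ∧ j' = h - 2) := by
      by_contra hc
      push_neg at hc
      obtain ⟨⟨a1, a2⟩, b1, b2⟩ := hc
      exact hne' ⟨a1.trans b1.symm, a2.trans b2.symm⟩
    rcases key with hk | hk
    · have := lemOdd' h i j hh hi hj ho hk
      have := lemOdd h i' j' hh hi' hj' ho'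
      linarith
    · have := lemOdd h i j hh hi hj ho
      have := lemOdd' h i' j' hh hi' hj' ho' hk
      linarith
  · intro ho ho'
    have hodd : ¬ Odd (i + j) := by simpa [Nat.not_odd_iff_even] using ho
    have hodd' : ¬ Odd (i' + j') := by simpa [Nat.not_odd_iff_even] using ho'
    rw [hw i j, hw i' j', if_neg hodd, if_neg hodd']
    have hgoal2 : (2 : ℝ) * h * (h - 1) + 2 = ((h:ℝ) * h - h + 1) + ((h:ℝ)*h - h + 1) := by ring
    rw [gt_iff_lt, hgoal2]
    have key : ¬(i = h - 1 ∧ j = h - 1) ∨ ¬(i' = h - 1 ∧ j' = h - 1) := by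
      by_contra hc
      push_neg at hc
      obtain ⟨⟨a1, a2⟩, b1, b2⟩ := hc
      exact hne' ⟨a1.trans b1.symm, a2.trans b2.symm⟩
    rcases key with hk | hk
    · have := lemEven' h i j hh hi hj ho hk
      have := lemEven h i' j' hh hi' hj' ho'
      linarith
    · have := lemEven h i j hh hi hj ho
      have := lemEven' h i' j' hh hi' hj' ho' hk
      linarith
end

section
/- In a d-dimensional grid graph, let u be a vertex and v, v' two distinct neighbors of u that are not opposed (i.e., there is no dimension i with |v_i − v'_i| = 2 and v_j = v'_j for all j ≠ i). Then there exists exactly one vertex x ≠ u with N(u) ∩ N(x) = {v, v'}. -/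
/-- The `d`-dimensional grid graph on `∀ i, Fin (n i)`: two vertices are adjacent
iff they differ by exactly 1 in exactly one coordinate. -/
def gridGraphD (d : ℕ) (n : Fin d → ℕ) : SimpleGraph (∀ i : Fin d, Fin (n i)) where
  Adj u v := ∃ i, |(u i : ℤ) - (v i : ℤ)| = 1 ∧ ∀ j, j ≠ i → u j = v j
  symm := by
    constructor
    rintro u v ⟨i, h1, h2⟩
    exact ⟨i, by rwa [abs_sub_comm], fun j hj => (h2 j hj).symm⟩
  loopless := by constructor; rintro u ⟨i, h1, -⟩; simp at h1


/-- Two vertices of the grid graph are opposed if they differ by exactly 2 in one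
coordinate and agree in all others. -/
def Opposed {d : ℕ} {n : Fin d → ℕ} (v v' : ∀ i : Fin d, Fin (n i)) : Prop :=
  ∃ i, |(v i : ℤ) - (v' i : ℤ)| = 2 ∧ ∀ j, j ≠ i → v j = v' j

/-!
Write `v = u[i ↦ a]` and `v' = u[i' ↦ b]`. Since `v ≠ v'` are not opposed, `i ≠ i'`, and the
candidate is the fourth corner `x = u[i ↦ a][i' ↦ b]` of the square through `u`, `v`, `v'`.
Everything follows from one observation: if `p` and `q` differ in two distinct coordinates,
then their only common neighbours are the two corners obtained by changing one of these
coordinates of `p` into that of `q`. Applied to `u, x` it identifies `N(u) ∩ N(x)`; applied to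
`v, v'` it shows that any other candidate is `u` or `x`.
-/

open Function

theorem Fin.ne_of_abs_sub_eq_one {m : ℕ} {p q : Fin m} (h : |(p : ℤ) - q| = 1) : p ≠ q := by
  rintro rfl
  simp at h

namespace gridGraphD

variable {d : ℕ} {n : Fin d → ℕ}

theorem adj_iff_exists_update {u v : ∀ i : Fin d, Fin (n i)} :
    (gridGraphD d n).Adj u v ↔
      ∃ i, ∃ c : Fin (n i), |(u i : ℤ) - c| = 1 ∧ v = update u i c := by
  constructor
  · rintro ⟨i, hi, hv⟩
    exact ⟨i, v i, hi, eq_update_iff.2 ⟨rfl, fun j hj => (hv j hj).symm⟩⟩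
  · rintro ⟨i, c, hc, rfl⟩
    exact ⟨i, by simpa using hc, fun j hj => (update_of_ne hj c u).symm⟩

theorem adj_update {u : ∀ i : Fin d, Fin (n i)} {i : Fin d} {c : Fin (n i)}
    (hc : |(u i : ℤ) - c| = 1) : (gridGraphD d n).Adj u (update u i c) :=
  adj_iff_exists_update.2 ⟨i, c, hc, rfl⟩

theorem opposed_update_update {u : ∀ i : Fin d, Fin (n i)} {i : Fin d} {a b : Fin (n i)}
    (ha : |(u i : ℤ) - a| = 1) (hb : |(u i : ℤ) - b| = 1) (hab : a ≠ b) :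
    Opposed (update u i a) (update u i b) := by
  refine ⟨i, ?_, fun j hj => by simp [update_of_ne hj]⟩
  have hab' : (a : ℤ) ≠ b := fun h => hab (Fin.ext (by exact_mod_cast h))
  simp only [update_self]
  rw [abs_eq (by norm_num)] at ha hb ⊢
  omega

theorem eq_update_or_eq_update_of_adj_of_adj {p w q : ∀ i : Fin d, Fin (n i)}
    (hpw : (gridGraphD d n).Adj p w) (hwq : (gridGraphD d n).Adj w q) {i i' : Fin d}
    (hii' : i ≠ i') (hi : p i ≠ q i) (hi' : p i' ≠ q i') :
    w = update p i (q i) ∨ w = update p i' (q i') := by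
  obtain ⟨k, c, -, rfl⟩ := adj_iff_exists_update.1 hpw
  obtain ⟨k', c', -, rfl⟩ := adj_iff_exists_update.1 hwq
  have hchanged : ∀ j, p j ≠ update (update p k c) k' c' j → j = k ∨ j = k' := by
    intro j hj
    by_contra! h
    exact hj (by rw [update_of_ne h.2, update_of_ne h.1])
  rcases hchanged i hi with rfl | rfl <;> rcases hchanged i' hi' with rfl | rfl
  all_goals first
    | exact absurd rfl hii'
    | simp [update_of_ne hii', update_of_ne hii'.symm]

theorem neighborSet_inter_neighborSet_update_update {u : ∀ i : Fin d, Fin (n i)} {i i' : Fin d}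
    (hii' : i ≠ i') {a : Fin (n i)} {b : Fin (n i')} (ha : |(u i : ℤ) - a| = 1)
    (hb : |(u i' : ℤ) - b| = 1) :
    (gridGraphD d n).neighborSet u ∩ (gridGraphD d n).neighborSet (update (update u i a) i' b) =
      {update u i a, update u i' b} := by
  have hxi : update (update u i a) i' b i = a := by simp [update_of_ne hii']
  have hxi' : update (update u i a) i' b i' = b := update_self ..
  ext w
  simp only [Set.mem_inter_iff, SimpleGraph.mem_neighborSet, Set.mem_insert_iff,
    Set.mem_singleton_iff]
  constructor
  · rintro ⟨huw, hxw⟩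
    simpa [hxi, hxi'] using eq_update_or_eq_update_of_adj_of_adj huw hxw.symm hii'
      (by rw [hxi]; exact Fin.ne_of_abs_sub_eq_one ha)
      (by rw [hxi']; exact Fin.ne_of_abs_sub_eq_one hb)
  · rintro (rfl | rfl)
    · exact ⟨adj_update ha, (adj_update (by simpa [update_of_ne hii'.symm] using hb)).symm⟩
    · refine ⟨adj_update hb, ?_⟩
      rw [update_comm hii']
      exact (adj_update (by simpa [update_of_ne hii'] using ha)).symm

end gridGraphD

open gridGraphD

theorem stmt17 (d : ℕ) (n : Fin d → ℕ) (u v v' : ∀ i : Fin d, Fin (n i))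
    (hv : (gridGraphD d n).Adj u v) (hv' : (gridGraphD d n).Adj u v') (hne : v ≠ v')
    (hop : ¬ Opposed v v') :
    ∃! x, x ≠ u ∧
      (gridGraphD d n).neighborSet u ∩ (gridGraphD d n).neighborSet x = {v, v'} := by
  obtain ⟨i, a, ha, rfl⟩ := adj_iff_exists_update.1 hv
  obtain ⟨i', b, hb, rfl⟩ := adj_iff_exists_update.1 hv'
  have hii' : i ≠ i' := by
    rintro rfl
    exact hop (opposed_update_update ha hb fun hab => hne (hab ▸ rfl))
  have hua : u i ≠ a := Fin.ne_of_abs_sub_eq_one ha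
  have hub : u i' ≠ b := Fin.ne_of_abs_sub_eq_one hb
  refine ⟨update (update u i a) i' b, ⟨fun hx => hua ?_,
    neighborSet_inter_neighborSet_update_update hii' ha hb⟩, ?_⟩
  · simpa [update_of_ne hii'] using congrFun hx.symm i
  · rintro y ⟨hyu, hy⟩
    have hcommon : ∀ w ∈ ({update u i a, update u i' b} : Set _), (gridGraphD d n).Adj y w :=
      fun w hw => by rw [← hy] at hw; exact hw.2
    rcases eq_update_or_eq_update_of_adj_of_adj (hcommon _ (.inl rfl)).symm
      (hcommon _ (.inr rfl)) hii' (by simpa [update_of_ne hii'] using hua.symm)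
      (by simpa [update_of_ne hii'.symm] using hub) with rfl | rfl
    · simp [update_of_ne hii'] at hyu
    · simp
end
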